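/- arXiv:1202.2826 — 7 statements merged into one kernel-verified Lean document; each statement's English description precedes it below -/
import Mathlib

section
/- Let m, x, β, K be real numbers with m > 0, x > 0, β > 0. If m + β·ln(m) > x + β·ln(x) + K, then m > x + K/(1 + β/x). -/
/-! Concavity of `log` bounds `β (ln m - ln x)` by `β (m - x) / x`, so the hypothesis gives
`K < (m - x) (1 + β / x)`; divide by the positive factor. -/

theorem Real.log_sub_log_le_sub_div {x y : ℝ} (hx : 0 < x) (hy : 0 < y) :
    Real.log y - Real.log x ≤ (y - x) / x := by
  rw [← Real.log_div hy.ne' hx.ne', sub_div, div_self hx.ne']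
  exact Real.log_le_sub_one_of_pos (div_pos hy hx)

/-- Lemma L1. If `m + β·ln m > x + β·ln x + K` with `m, x, β > 0`, then
`m > x + K / (1 + β/x)`. -/
theorem gt_add_div_of_add_log_gt (m x β K : ℝ) (hm : 0 < m) (hx : 0 < x) (hβ : 0 < β)
    (h : m + β * Real.log m > x + β * Real.log x + K) :
    m > x + K / (1 + β / x) := by
  have hK : K < (m - x) * (1 + β / x) :=
    calc K < (m - x) + β * (Real.log m - Real.log x) := by linarith
      _ ≤ (m - x) + β * ((m - x) / x) := by
        gcongr
        exact Real.log_sub_log_le_sub_div hx hm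
      _ = (m - x) * (1 + β / x) := by ring
  have := (div_lt_iff₀ (by positivity : 0 < 1 + β / x)).mpr hK
  linarith
end

section
/- Let d_c ≥ 2 be an integer and let m > 3 and x > 0 be real numbers; set δ = 1 − 3/m (so δ > 0). If √(π/m)·exp(−m/4) < ((d_c − 1)/δ)·√(π/x)·exp(−x/4), then m > x − (4·ln((d_c − 1)/δ)) / (1 + 2/x). -/
/-- inequality (DE8). Let `d_c ≥ 2`, `m > 3`, `x > 0` and `δ = 1 − 3/m`.
If `√(π/m)·exp(−m/4) < ((d_c − 1)/δ)·√(π/x)·exp(−x/4)` then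
`m > x − 4·ln((d_c − 1)/δ) / (1 + 2/x)`. -/
theorem de8_inequality (d_c : ℕ) (hdc : 2 ≤ d_c) (m x δ : ℝ) (hm : 3 < m) (hx : 0 < x)
    (hδ : δ = 1 - 3 / m)
    (h : Real.sqrt (Real.pi / m) * Real.exp (-m / 4)
        < ((d_c : ℝ) - 1) / δ * Real.sqrt (Real.pi / x) * Real.exp (-x / 4)) :
    m > x - 4 * Real.log (((d_c : ℝ) - 1) / δ) / (1 + 2 / x) := by
  have hm0 : (0:ℝ) < m := by linarith
  have hδpos : 0 < δ := by
    rw [hδ]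
    have h1 : 3 / m < 1 := (div_lt_one hm0).2 (by linarith)
    linarith
  have hdc1 : (1:ℝ) ≤ (d_c : ℝ) - 1 := by
    have h2 : (2:ℝ) ≤ (d_c:ℝ) := by exact_mod_cast hdc
    linarith
  set K := ((d_c : ℝ) - 1) / δ with hKdef
  have hK1 : 1 < K := by
    rw [hKdef, lt_div_iff₀ hδpos, one_mul]
    have h3 : 0 < 3 / m := div_pos (by norm_num) hm0
    rw [hδ] at *
    linarith
  have hK0 : (0:ℝ) < K := by linarith
  have hπ : 0 < Real.pi := Real.pi_pos
  have hπm : 0 < Real.pi / m := div_pos hπ hm0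
  have hπx : 0 < Real.pi / x := div_pos hπ hx
  have hL : 0 < Real.sqrt (Real.pi / m) * Real.exp (-m/4) :=
    mul_pos (Real.sqrt_pos.2 hπm) (Real.exp_pos _)
  have hlog := Real.log_lt_log hL h
  rw [Real.log_mul (ne_of_gt (Real.sqrt_pos.2 hπm)) (Real.exp_ne_zero _),
      Real.log_exp, mul_assoc, Real.log_mul (ne_of_gt hK0)
        (ne_of_gt (mul_pos (Real.sqrt_pos.2 hπx) (Real.exp_pos _))),
      Real.log_mul (ne_of_gt (Real.sqrt_pos.2 hπx)) (Real.exp_ne_zero _),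
      Real.log_exp, Real.log_sqrt (le_of_lt hπm),
      Real.log_sqrt (le_of_lt hπx),
      Real.log_div (ne_of_gt hπ) (ne_of_gt hm0),
      Real.log_div (ne_of_gt hπ) (ne_of_gt hx)] at hlog
  have hlin : Real.log m - Real.log x ≤ m / x - 1 := by
    have h4 := Real.log_le_sub_one_of_pos (div_pos hm0 hx)
    rwa [Real.log_div (ne_of_gt hm0) (ne_of_gt hx)] at h4
  have h2 : 0 < 1 + 2 / x := by positivity
  have expand : (x - m) * (1 + 2 / x) = x - m + 2 - 2 * (m / x) := by
    field_simp
    ring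
  have key : (x - m) * (1 + 2 / x) < 4 * Real.log K := by
    rw [expand]; linarith
  have hfin : x - m < 4 * Real.log K / (1 + 2 / x) := (lt_div_iff₀ h2).2 key
  linarith
end

section
/- Let d_v ≥ 3 and d_c ≥ 2 be integers, and let m_prev > 0, m_λ > 0, m > 3 be real numbers. Set x = m_λ + (d_v − 1)·m_prev and δ = 1 − 3/m. If √(π/m)·exp(−m/4) < ((d_c − 1)/δ)·√(π/x)·exp(−x/4) and m_λ > 4·ln((d_c − 1)/δ), then m > (d_v − 1)·m_prev. -/
/-!
If `m ≤ (d_v - 1)·m_prev`, then `x - m ≥ m_λ > 4 log C` with `C = (d_c - 1)/δ > 0`. Both factors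
of `t ↦ √(π/t)·exp(-t/4)` decrease in `t`, and the gap in the exponent beats the constant `C`,
so `C·√(π/x)·exp(-x/4) < √(π/m)·exp(-m/4)`, contradicting the first hypothesis.
-/

open Real

lemma mul_exp_neg_div_four_lt_exp {C a b : ℝ} (hC : 0 < C) (hgap : 4 * log C < b - a) :
    C * exp (-b / 4) < exp (-a / 4) := by
  calc C * exp (-b / 4) = exp (log C - b / 4) := by
        rw [sub_eq_add_neg, exp_add, exp_log hC, neg_div]
    _ < exp (-a / 4) := exp_lt_exp.mpr (by linarith)

lemma mul_sqrt_pi_div_mul_exp_lt {C a b : ℝ} (hC : 0 < C) (ha : 0 < a) (hab : a ≤ b)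
    (hgap : 4 * log C < b - a) :
    C * √(π / b) * exp (-b / 4) < √(π / a) * exp (-a / 4) := by
  calc C * √(π / b) * exp (-b / 4) = √(π / b) * (C * exp (-b / 4)) := by ring
    _ ≤ √(π / a) * (C * exp (-b / 4)) :=
      mul_le_mul_of_nonneg_right
        (sqrt_le_sqrt (div_le_div_of_nonneg_left pi_pos.le ha hab)) (by positivity)
    _ < √(π / a) * exp (-a / 4) :=
      mul_lt_mul_of_pos_left (mul_exp_neg_div_four_lt_exp hC hgap)
        (sqrt_pos.mpr (div_pos pi_pos ha))

theorem de_one_step_growth_general (d_v d_c : ℕ) (hdc : 2 ≤ d_c)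
    (m_prev m_lam m x δ : ℝ) (hlam : 0 < m_lam) (hm : 3 < m)
    (hx : x = m_lam + ((d_v : ℝ) - 1) * m_prev) (hδ : δ = 1 - 3 / m)
    (h1 : Real.sqrt (Real.pi / m) * Real.exp (-m / 4)
        < ((d_c : ℝ) - 1) / δ * Real.sqrt (Real.pi / x) * Real.exp (-x / 4))
    (h2 : m_lam > 4 * Real.log (((d_c : ℝ) - 1) / δ)) :
    m > ((d_v : ℝ) - 1) * m_prev := by
  by_contra! hle
  have hδ_pos : 0 < δ := by
    rw [hδ, sub_pos, div_lt_one (by linarith)]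
    exact hm
  have hC : 0 < ((d_c : ℝ) - 1) / δ := by
    have : (2 : ℝ) ≤ d_c := by exact_mod_cast hdc
    exact div_pos (by linarith) hδ_pos
  have hmx : m ≤ x := by linarith
  have hgap : 4 * log (((d_c : ℝ) - 1) / δ) < x - m := by linarith
  exact lt_asymm h1 (mul_sqrt_pi_div_mul_exp_lt hC (by linarith) hmx hgap)

/-- one-step growth condition of Theorem 2. Let `d_v ≥ 3`, `d_c ≥ 2`,
`m_prev, m_λ > 0`, `m > 3`, `x = m_λ + (d_v − 1)·m_prev` and `δ = 1 − 3/m`.  If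
`√(π/m)·exp(−m/4) < ((d_c − 1)/δ)·√(π/x)·exp(−x/4)` and `m_λ > 4·ln((d_c − 1)/δ)`, then
`m > (d_v − 1)·m_prev`. -/
theorem de_one_step_growth (d_v d_c : ℕ) (hdv : 3 ≤ d_v) (hdc : 2 ≤ d_c)
    (m_prev m_lam m x δ : ℝ) (hprev : 0 < m_prev) (hlam : 0 < m_lam) (hm : 3 < m)
    (hx : x = m_lam + ((d_v : ℝ) - 1) * m_prev) (hδ : δ = 1 - 3 / m)
    (h1 : Real.sqrt (Real.pi / m) * Real.exp (-m / 4)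
        < ((d_c : ℝ) - 1) / δ * Real.sqrt (Real.pi / x) * Real.exp (-x / 4))
    (h2 : m_lam > 4 * Real.log (((d_c : ℝ) - 1) / δ)) :
    m > ((d_v : ℝ) - 1) * m_prev :=
  de_one_step_growth_general d_v d_c hdc m_prev m_lam m x δ hlam hm hx hδ h1 h2
end

section
/- Let d_v ≥ 3 and d_c ≥ 2 be integers, let r be a real number with 1 ≤ r < d_v − 1, set ε = d_v − 1 − r > 0, and let m_prev > 0, m_λ > 0, m > 3 be real numbers. Set x = m_λ + (d_v − 1)·m_prev and δ = 1 − 3/m. If √(π/m)·exp(−m/4) < ((d_c − 1)/δ)·√(π/x)·exp(−x/4) and m_λ/4 > ln((d_c − 1)/δ)/(1 + 2/x) − ε·m_prev/4, then m > r·m_prev. -/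
/-- one-step growth condition (DE13) of Corollary 2. Let `d_v ≥ 3`,
`d_c ≥ 2`, `1 ≤ r < d_v − 1`, `ε = d_v − 1 − r`, `m_prev, m_λ > 0`, `m > 3`,
`x = m_λ + (d_v − 1)·m_prev` and `δ = 1 − 3/m`.  If
`√(π/m)·exp(−m/4) < ((d_c − 1)/δ)·√(π/x)·exp(−x/4)` and
`m_λ/4 > ln((d_c − 1)/δ)/(1 + 2/x) − ε·m_prev/4`, then `m > r·m_prev`. -/
theorem de13_one_step_growth (d_v d_c : ℕ) (hdv : 3 ≤ d_v) (hdc : 2 ≤ d_c)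
    (r ε : ℝ) (hr1 : 1 ≤ r) (hr2 : r < (d_v : ℝ) - 1) (hε : ε = (d_v : ℝ) - 1 - r)
    (m_prev m_lam m x δ : ℝ) (hprev : 0 < m_prev) (hlam : 0 < m_lam) (hm : 3 < m)
    (hx : x = m_lam + ((d_v : ℝ) - 1) * m_prev) (hδ : δ = 1 - 3 / m)
    (h1 : Real.sqrt (Real.pi / m) * Real.exp (-m / 4)
        < ((d_c : ℝ) - 1) / δ * Real.sqrt (Real.pi / x) * Real.exp (-x / 4))
    (h2 : m_lam / 4 > Real.log (((d_c : ℝ) - 1) / δ) / (1 + 2 / x) - ε * m_prev / 4) :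
    m > r * m_prev := by
  by_contra hcontra
  push_neg at hcontra
  have hm0 : (0:ℝ) < m := by linarith
  have hδpos : 0 < δ := by
    rw [hδ]
    have h3 : 3 / m < 1 := (div_lt_one hm0).2 hm
    linarith
  have hdc1 : (1:ℝ) ≤ (d_c:ℝ) - 1 := by
    have : (2:ℝ) ≤ (d_c:ℝ) := by exact_mod_cast hdc
    linarith
  have hCpos : 0 < ((d_c:ℝ)-1)/δ := div_pos (by linarith) hδpos
  have hεpos : 0 < ε := by rw [hε]; linarith
  have hxpos : 0 < x := by rw [hx]; nlinarith
  have hs : m_lam + ε*m_prev ≤ x - m := by rw [hx, hε]; nlinarith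
  have hxm : m < x := by nlinarith
  have hπ := Real.pi_pos
  have hL : 0 < Real.sqrt (Real.pi / m) * Real.exp (-m/4) :=
    mul_pos (Real.sqrt_pos.2 (div_pos hπ hm0)) (Real.exp_pos _)
  have hlog := Real.log_lt_log hL h1
  rw [Real.log_mul (by positivity) (Real.exp_ne_zero _),
      Real.log_mul (by positivity) (Real.exp_ne_zero _),
      Real.log_mul (by positivity) (by positivity),
      Real.log_exp, Real.log_exp,
      Real.log_sqrt (le_of_lt (div_pos hπ hm0)),
      Real.log_sqrt (le_of_lt (div_pos hπ hxpos)),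
      Real.log_div (ne_of_gt hπ) (ne_of_gt hm0),
      Real.log_div (ne_of_gt hπ) (ne_of_gt hxpos)] at hlog
  -- hlog : (log π - log m)/2 + (-m/4) < log C + ((log π - log x)/2 + (-x/4))
  have hlog' : (Real.log x - Real.log m)/2 + (x-m)/4 < Real.log (((d_c:ℝ)-1)/δ) := by
    linarith
  have hkey : Real.log m - Real.log x ≤ m/x - 1 := by
    have := Real.log_le_sub_one_of_pos (div_pos hm0 hxpos)
    rwa [Real.log_div (ne_of_gt hm0) (ne_of_gt hxpos)] at this
  have heq1 : (1:ℝ) - m/x = (x - m)/x := by field_simp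
  have hA : (x - m)/(2*x) ≤ (Real.log x - Real.log m)/2 := by
    have : (1:ℝ) - m/x ≤ Real.log x - Real.log m := by linarith
    rw [heq1] at this
    have : (x-m)/x / 2 ≤ (Real.log x - Real.log m)/2 := by linarith
    calc (x - m)/(2*x) = (x-m)/x/2 := by ring
    _ ≤ _ := this
  have hB : (x-m)/(2*x) + (x-m)/4 < Real.log (((d_c:ℝ)-1)/δ) := by linarith
  have hden : (0:ℝ) < 1 + 2/x := by positivity
  have h2' : Real.log (((d_c:ℝ)-1)/δ) < (1 + 2/x) * ((m_lam + ε*m_prev)/4) := by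
    have := (div_lt_iff₀ hden).1 (by linarith : Real.log (((d_c:ℝ)-1)/δ) / (1 + 2/x) < m_lam/4 + ε*m_prev/4)
    linarith [this]
  have hC2 : (1 + 2/x) * ((m_lam + ε*m_prev)/4) ≤ (1 + 2/x) * ((x-m)/4) :=
    mul_le_mul_of_nonneg_left (by linarith) (le_of_lt hden)
  have heq2 : (1 + 2/x) * ((x-m)/4) = (x-m)/4 + (x-m)/(2*x) := by
    field_simp
    ring
  linarith [hB, h2', hC2, heq2.le, heq2.ge]
end

section
/- Let d_v ≥ 3 be an integer, let J be a finite set of integers each at least 2, let (ρ_j)_{j∈J} be nonnegative real weights with Σ_{j∈J} ρ_j = 1, and let x > 0 and, for each j ∈ J, m_j > 3 be real numbers; set δ_j = 1 − 3/m_j. If for every j ∈ J one has √(π/m_j)·exp(−m_j/4) < ((j − 1)/δ_j)·√(π/x)·exp(−x/4), then Σ_{j∈J} ρ_j·m_j > x − Σ_{j∈J} ρ_j·(4·ln((j − 1)/δ_j))/(1 + 2/x). Consequently, if moreover x = m_λ + (d_v − 1)·m_prev with m_prev > 0 and m_λ > 4·Σ_{j∈J} ρ_j·ln((j − 1)/δ_j),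 then Σ_{j∈J} ρ_j·m_j > (d_v − 1)·m_prev. -/
/-- quantitative core of Theorem 3, check-irregular case. Let `d_v ≥ 3`,
let `J` be a finite set of integers each at least `2`, with nonnegative weights `ρ_j` summing
to `1`, let `x > 0` and `m_j > 3` for `j ∈ J`, and set `δ_j = 1 − 3/m_j`.  If for every
`j ∈ J` one has `√(π/m_j)·exp(−m_j/4) < ((j − 1)/δ_j)·√(π/x)·exp(−x/4)`, then
`Σ ρ_j·m_j > x − Σ ρ_j·(4·ln((j − 1)/δ_j))/(1 + 2/x)`; consequently, if moreover
`x = m_λ + (d_v − 1)·m_prev` with `m_prev > 0` and `m_λ > 4·Σ ρ_j·ln((j − 1)/δ_j)`, then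
`Σ ρ_j·m_j > (d_v − 1)·m_prev`. -/
theorem de_irregular_growth (d_v : ℕ) (hdv : 3 ≤ d_v) (J : Finset ℕ)
    (hJ : ∀ j ∈ J, 2 ≤ j) (ρ m δ : ℕ → ℝ)
    (hρ : ∀ j ∈ J, 0 ≤ ρ j) (hsum : ∑ j ∈ J, ρ j = 1)
    (x : ℝ) (hx : 0 < x) (hm : ∀ j ∈ J, 3 < m j)
    (hδ : ∀ j ∈ J, δ j = 1 - 3 / m j)
    (hineq : ∀ j ∈ J, Real.sqrt (Real.pi / m j) * Real.exp (-(m j) / 4)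
        < ((j : ℝ) - 1) / δ j * Real.sqrt (Real.pi / x) * Real.exp (-x / 4)) :
    (∑ j ∈ J, ρ j * m j
        > x - ∑ j ∈ J, ρ j * (4 * Real.log (((j : ℝ) - 1) / δ j)) / (1 + 2 / x)) ∧
    (∀ m_lam m_prev : ℝ, 0 < m_prev →
      x = m_lam + ((d_v : ℝ) - 1) * m_prev →
      m_lam > 4 * ∑ j ∈ J, ρ j * Real.log (((j : ℝ) - 1) / δ j) →
      ∑ j ∈ J, ρ j * m j > ((d_v : ℝ) - 1) * m_prev) := by
  have hxinv : (0:ℝ) < 1 + 2 / x := by positivity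
  have h1le : (1:ℝ) ≤ 1 + 2 / x := by
    have : 0 < 2 / x := by positivity
    linarith
  -- positivity of logs
  have hc1 : ∀ j ∈ J, 1 < ((j : ℝ) - 1) / δ j := by
    intro j hj
    have hm3 := hm j hj
    have hmpos : 0 < m j := by linarith
    have hδpos : 0 < δ j := by
      rw [hδ j hj]
      have : 3 / m j < 1 := (div_lt_one hmpos).mpr hm3
      linarith
    have hδlt : δ j < 1 := by
      rw [hδ j hj]
      have : 0 < 3 / m j := by positivity
      linarith
    have hj2 : (2:ℝ) ≤ (j : ℝ) := by exact_mod_cast hJ j hj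
    rw [lt_div_iff₀ hδpos]
    linarith
  have hlogpos : ∀ j ∈ J, 0 < Real.log (((j : ℝ) - 1) / δ j) :=
    fun j hj => Real.log_pos (hc1 j hj)
  -- key pointwise bound
  have hkey : ∀ j ∈ J, x - 4 * Real.log (((j : ℝ) - 1) / δ j) / (1 + 2 / x) < m j := by
    intro j hj
    have hm3 := hm j hj
    have hmpos : 0 < m j := by linarith
    have hcpos : 0 < ((j : ℝ) - 1) / δ j := lt_trans one_pos (hc1 j hj)
    have hL : 0 < Real.sqrt (Real.pi / m j) * Real.exp (-(m j) / 4) := by positivity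
    have hlog := Real.log_lt_log hL (hineq j hj)
    have e1 : Real.log (Real.sqrt (Real.pi / m j) * Real.exp (-(m j) / 4))
        = (Real.log Real.pi - Real.log (m j)) / 2 - m j / 4 := by
      rw [Real.log_mul (by positivity) (Real.exp_ne_zero _), Real.log_exp,
        Real.log_sqrt (by positivity),
        Real.log_div (ne_of_gt Real.pi_pos) (ne_of_gt hmpos)]
      ring
    have e2 : Real.log (((j : ℝ) - 1) / δ j * Real.sqrt (Real.pi / x) * Real.exp (-x / 4))
        = Real.log (((j : ℝ) - 1) / δ j) + (Real.log Real.pi - Real.log x) / 2 - x / 4 := by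
      rw [Real.log_mul (by positivity) (Real.exp_ne_zero _),
        Real.log_mul (ne_of_gt hcpos) (by positivity), Real.log_exp,
        Real.log_sqrt (by positivity),
        Real.log_div (ne_of_gt Real.pi_pos) (ne_of_gt hx)]
      ring
    rw [e1, e2] at hlog
    have hlb : Real.log (m j) - Real.log x ≤ m j / x - 1 := by
      have h := Real.log_le_sub_one_of_pos (show 0 < m j / x by positivity)
      rw [Real.log_div (ne_of_gt hmpos) (ne_of_gt hx)] at h
      linarith
    have h2 : (x - m j) * (1 + 2 / x) < 4 * Real.log (((j : ℝ) - 1) / δ j) := by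
      have hexp : (x - m j) * (1 + 2 / x) = x - m j + 2 - 2 * (m j / x) := by
        field_simp
        ring
      rw [hexp]
      linarith
    have h3 : x - m j < 4 * Real.log (((j : ℝ) - 1) / δ j) / (1 + 2 / x) :=
      (lt_div_iff₀ hxinv).mpr h2
    linarith
  -- some positive weight exists
  obtain ⟨j0, hj0J, hj0⟩ : ∃ j ∈ J, (0:ℝ) < ρ j := by
    by_contra h
    push_neg at h
    have : ∑ j ∈ J, ρ j = 0 :=
      Finset.sum_eq_zero (fun j hj => le_antisymm (h j hj) (hρ j hj))
    rw [hsum] at this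
    norm_num at this
  -- main sum inequality
  have hmain : ∑ j ∈ J, ρ j * m j
      > x - ∑ j ∈ J, ρ j * (4 * Real.log (((j : ℝ) - 1) / δ j)) / (1 + 2 / x) := by
    have hsum_lt : ∑ j ∈ J,
        (ρ j * x - ρ j * (4 * Real.log (((j : ℝ) - 1) / δ j)) / (1 + 2 / x))
        < ∑ j ∈ J, ρ j * m j := by
      apply Finset.sum_lt_sum
      · intro j hj
        have hk := (hkey j hj).le
        have h1 : ρ j * (x - 4 * Real.log (((j : ℝ) - 1) / δ j) / (1 + 2 / x)) ≤ ρ j * m j :=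
          mul_le_mul_of_nonneg_left hk (hρ j hj)
        have h2 : ρ j * x - ρ j * (4 * Real.log (((j : ℝ) - 1) / δ j)) / (1 + 2 / x)
            = ρ j * (x - 4 * Real.log (((j : ℝ) - 1) / δ j) / (1 + 2 / x)) := by ring
        rw [h2]
        exact h1
      · refine ⟨j0, hj0J, ?_⟩
        have h1 : ρ j0 * (x - 4 * Real.log (((j0 : ℝ) - 1) / δ j0) / (1 + 2 / x))
            < ρ j0 * m j0 :=
          mul_lt_mul_of_pos_left (hkey j0 hj0J) hj0
        have h2 : ρ j0 * x - ρ j0 * (4 * Real.log (((j0 : ℝ) - 1) / δ j0)) / (1 + 2 / x)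
            = ρ j0 * (x - 4 * Real.log (((j0 : ℝ) - 1) / δ j0) / (1 + 2 / x)) := by ring
        rw [h2]
        exact h1
    have hre : ∑ j ∈ J,
        (ρ j * x - ρ j * (4 * Real.log (((j : ℝ) - 1) / δ j)) / (1 + 2 / x))
        = x - ∑ j ∈ J, ρ j * (4 * Real.log (((j : ℝ) - 1) / δ j)) / (1 + 2 / x) := by
      rw [Finset.sum_sub_distrib, ← Finset.sum_mul, hsum, one_mul]
    rw [hre] at hsum_lt
    exact hsum_lt
  refine ⟨hmain, ?_⟩
  intro m_lam m_prev hmp hxeq hml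
  have hT : ∑ j ∈ J, ρ j * (4 * Real.log (((j : ℝ) - 1) / δ j)) / (1 + 2 / x)
      ≤ 4 * ∑ j ∈ J, ρ j * Real.log (((j : ℝ) - 1) / δ j) := by
    rw [Finset.mul_sum]
    apply Finset.sum_le_sum
    intro j hj
    have hnn : 0 ≤ ρ j * (4 * Real.log (((j : ℝ) - 1) / δ j)) := by
      have := (hlogpos j hj).le
      have := hρ j hj
      positivity
    calc ρ j * (4 * Real.log (((j : ℝ) - 1) / δ j)) / (1 + 2 / x)
        ≤ ρ j * (4 * Real.log (((j : ℝ) - 1) / δ j)) := div_le_self hnn h1le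
      _ = 4 * (ρ j * Real.log (((j : ℝ) - 1) / δ j)) := by ring
  linarith
end

section
/- Let G be a finite connected simple graph in which every vertex has degree at least 2 and some vertex has degree at least 3. Then for every ordered pair of darts (d, e) of G there exists a walk in G whose sequence of darts begins with d, ends with e, and in which no dart is immediately followed by its reverse (a non-backtracking walk). -/
/-!
Let `S` be the set of darts reachable from a dart `d` in the non-backtracking digraph. Reversing
walks shows that if `d.symm ∉ S`, then `S` never contains a dart together with its reverse.
Then every head `v` of a dart of `S` is the head of exactly one dart of `S` and the tail of
`deg v - 1 ≥ 1` of them, so counting `S` by heads and by tails forces every tail to be a head.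
The set of heads is then closed under adjacency, hence is all of `V`, and the vertex of degree
`≥ 3` makes the tail count exceed the head count. So every dart reaches its reverse, hence
every dart leaving its head, and connectivity of `G` does the rest.
-/

open Finset Relation

namespace SimpleGraph

variable {V : Type*} {G : SimpleGraph V}

variable (G) in
def nonBacktrackingDigraph : Digraph G.Dart where
  Adj e f := e.snd = f.fst ∧ f ≠ e.symm

lemma nonBacktrackingDigraph_adj_symm {e f : G.Dart} (h : G.nonBacktrackingDigraph.Adj e f) :
    G.nonBacktrackingDigraph.Adj f.symm e.symm :=
  ⟨h.1.symm, fun hfe => h.2 (by simpa using hfe.symm)⟩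

lemma reflTransGen_nonBacktrackingDigraph_symm {d e : G.Dart}
    (h : ReflTransGen G.nonBacktrackingDigraph.Adj d e) :
    ReflTransGen G.nonBacktrackingDigraph.Adj e.symm d.symm :=
  reflTransGen_swap.mp <|
    h.lift (p := Function.swap _) Dart.symm fun _ _ => nonBacktrackingDigraph_adj_symm

lemma exists_walk_of_reflTransGen_nonBacktrackingDigraph {d e : G.Dart}
    (h : ReflTransGen G.nonBacktrackingDigraph.Adj d e) :
    ∃ p : G.Walk d.fst e.snd, p.darts.head? = some d ∧ p.darts.getLast? = some e ∧
      p.darts.IsChain (fun a b => b ≠ a.symm) := by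
  induction h using ReflTransGen.head_induction_on with
  | refl => exact ⟨.cons e.adj .nil, rfl, rfl, List.isChain_singleton _⟩
  | @head d d' hdd' _ ih =>
    obtain ⟨p, hhead, hlast, hchain⟩ := ih
    refine ⟨.cons d.adj (p.copy hdd'.1.symm rfl), rfl, ?_, ?_⟩
    · simp only [Walk.darts_cons, Walk.darts_copy, List.getLast?_cons, hlast]
      rfl
    · simp only [Walk.darts_cons, Walk.darts_copy, List.isChain_cons, hhead]
      exact ⟨by rintro _ ⟨⟩; exact hdd'.2, hchain⟩

lemma eq_of_mem_of_snd_eq {S : Finset G.Dart}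
    (hclosed : ∀ e ∈ S, ∀ f, G.nonBacktrackingDigraph.Adj e f → f ∈ S)
    (hdisj : ∀ e ∈ S, e.symm ∉ S) {e g : G.Dart} (he : e ∈ S) (hg : g ∈ S)
    (h : e.snd = g.snd) : e = g := by
  by_contra hne
  refine hdisj g hg <| hclosed e he g.symm ⟨h, fun hge => hne ?_⟩
  exact (Dart.symm_involutive.injective hge).symm

lemma card_filter_fst_eq_snd [Fintype V] [DecidableEq V] [DecidableRel G.Adj]
    {S : Finset G.Dart} (hclosed : ∀ e ∈ S, ∀ f, G.nonBacktrackingDigraph.Adj e f → f ∈ S)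
    (hdisj : ∀ e ∈ S, e.symm ∉ S) {e : G.Dart} (he : e ∈ S) :
    #{f ∈ S | f.fst = e.snd} = G.degree e.snd - 1 := by
  have hfilter :
      {f ∈ S | f.fst = e.snd} = ({f | f.fst = e.snd} : Finset G.Dart).erase e.symm := by
    ext f
    simp only [mem_filter, mem_erase, mem_univ, true_and]
    constructor
    · rintro ⟨hf, hfe⟩
      exact ⟨fun h => hdisj e he (h ▸ hf), hfe⟩
    · rintro ⟨hne, hfe⟩
      exact ⟨hclosed e he f ⟨hfe.symm, hne⟩, hfe⟩
  rw [hfilter, card_erase_of_mem (by simp), dart_fst_fiber_card_eq_degree]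

lemma sum_degree_sub_one_eq_card_filter [Fintype V] [DecidableEq V] [DecidableRel G.Adj]
    {S : Finset G.Dart} (hclosed : ∀ e ∈ S, ∀ f, G.nonBacktrackingDigraph.Adj e f → f ∈ S)
    (hdisj : ∀ e ∈ S, e.symm ∉ S) :
    ∑ v ∈ S.image (·.snd), (G.degree v - 1) = #{f ∈ S | f.fst ∈ S.image (·.snd)} := by
  rw [← sum_card_fiberwise_eq_card_filter]
  refine sum_congr rfl fun v hv => ?_
  obtain ⟨e, he, rfl⟩ := mem_image.mp hv
  exact (card_filter_fst_eq_snd hclosed hdisj he).symm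

lemma Preconnected.mem_of_forall_adj_mem {T : Set V} (hconn : G.Preconnected)
    (hT : ∀ v ∈ T, ∀ u, G.Adj v u → u ∈ T) {v : V} (hv : v ∈ T) (u : V) : u ∈ T := by
  obtain ⟨p⟩ := hconn v u
  induction p with
  | nil => exact hv
  | cons h _ ih => exact ih (hT _ hv _ h)

lemma exists_symm_mem_of_forall_adj_mem [Fintype V] [DecidableRel G.Adj]
    (hconn : G.Connected) (hdeg : ∀ v, 2 ≤ G.degree v) (hbig : ∃ v, 3 ≤ G.degree v)
    {S : Finset G.Dart} (hS : S.Nonempty)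
    (hclosed : ∀ e ∈ S, ∀ f, G.nonBacktrackingDigraph.Adj e f → f ∈ S) :
    ∃ e ∈ S, e.symm ∈ S := by
  classical
  by_contra! hdisj
  set T := S.image (·.snd)
  have hcardT : #T = #S :=
    card_image_of_injOn fun e he g hg h => eq_of_mem_of_snd_eq hclosed hdisj he hg h
  have hsum : ∑ v ∈ T, (G.degree v - 1) = #{f ∈ S | f.fst ∈ T} :=
    sum_degree_sub_one_eq_card_filter hclosed hdisj
  have hcard_le : #T ≤ ∑ v ∈ T, (G.degree v - 1) := by
    rw [card_eq_sum_ones]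
    exact sum_le_sum fun v _ => by have := hdeg v; omega
  have hfst : ∀ f ∈ S, f.fst ∈ T := by
    refine card_filter_eq_iff.mp (le_antisymm (card_filter_le _ _) ?_)
    calc #S = #T := hcardT.symm
      _ ≤ ∑ v ∈ T, (G.degree v - 1) := hcard_le
      _ = #{f ∈ S | f.fst ∈ T} := hsum
  have hTclosed : ∀ v ∈ T, ∀ u, G.Adj v u → u ∈ T := by
    intro v hv u hvu
    obtain ⟨e, he, rfl⟩ := mem_image.mp hv
    by_cases hrev : (⟨(e.snd, u), hvu⟩ : G.Dart) = e.symm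
    · rw [show u = e.fst from congrArg (·.snd) hrev]
      exact hfst e he
    · exact mem_image_of_mem _ (hclosed e he _ ⟨rfl, hrev⟩)
  obtain ⟨w, hw⟩ := hbig
  obtain ⟨e, he⟩ := hS
  have hwT : w ∈ T := hconn.preconnected.mem_of_forall_adj_mem (T := T) hTclosed
    (mem_image_of_mem _ he) w
  have hcard_lt : #T < ∑ v ∈ T, (G.degree v - 1) := by
    rw [card_eq_sum_ones]
    exact sum_lt_sum (fun v _ => by have := hdeg v; omega) ⟨w, hwT, by omega⟩
  refine lt_irrefl #T ?_
  calc #T < ∑ v ∈ T, (G.degree v - 1) := hcard_lt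
    _ = #{f ∈ S | f.fst ∈ T} := hsum
    _ ≤ #S := card_filter_le _ _
    _ = #T := hcardT.symm

lemma reflTransGen_nonBacktrackingDigraph_self_symm [Fintype V] [DecidableRel G.Adj]
    (hconn : G.Connected) (hdeg : ∀ v, 2 ≤ G.degree v) (hbig : ∃ v, 3 ≤ G.degree v)
    (d : G.Dart) : ReflTransGen G.nonBacktrackingDigraph.Adj d d.symm := by
  classical
  set S : Finset G.Dart := {e | ReflTransGen G.nonBacktrackingDigraph.Adj d e}
  have hS : ∀ e, e ∈ S ↔ ReflTransGen G.nonBacktrackingDigraph.Adj d e := by simp [S]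
  obtain ⟨e, he, he'⟩ :=
    exists_symm_mem_of_forall_adj_mem hconn hdeg hbig ⟨d, (hS d).2 .refl⟩ fun e he f hef =>
      (hS f).2 (((hS e).1 he).tail hef)
  rw [hS] at he he'
  simpa using he.trans (reflTransGen_nonBacktrackingDigraph_symm he')

lemma Preconnected.dart_rel_of_snd_eq_fst {r : G.Dart → G.Dart → Prop} [IsTrans G.Dart r]
    (hconn : G.Preconnected) (hr : ∀ d f : G.Dart, d.snd = f.fst → r d f) (d e : G.Dart) :
    r d e := by
  suffices h : ∀ u v (p : G.Walk u v) (d e : G.Dart), d.snd = u → e.fst = v → r d e from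
    (hconn d.snd e.fst).elim fun p => h _ _ p d e rfl rfl
  intro u v p
  induction p with
  | nil => exact fun d e hd he => hr d e (hd.trans he.symm)
  | cons h _ ih =>
    exact fun d e hd he => _root_.trans (hr d ⟨(_, _), h⟩ hd) (ih _ e rfl he)

lemma reflTransGen_nonBacktrackingDigraph [Fintype V] [DecidableRel G.Adj]
    (hconn : G.Connected) (hdeg : ∀ v, 2 ≤ G.degree v) (hbig : ∃ v, 3 ≤ G.degree v)
    (d e : G.Dart) : ReflTransGen G.nonBacktrackingDigraph.Adj d e := by
  refine hconn.preconnected.dart_rel_of_snd_eq_fst (fun d f hdf => ?_) d e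
  by_cases hf : f = d.symm
  · exact hf ▸ reflTransGen_nonBacktrackingDigraph_self_symm hconn hdeg hbig d
  · exact .single ⟨hdf, hf⟩

end SimpleGraph

theorem nonbacktracking_line_digraph_strongly_connected_general {V : Type*} [Fintype V]
    (G : SimpleGraph V) [DecidableRel G.Adj]
    (hconn : G.Connected) (hdeg : ∀ v, 2 ≤ G.degree v) (hbig : ∃ v, 3 ≤ G.degree v) :
    ∀ d e : G.Dart, ∃ p : G.Walk d.fst e.snd,
      p.darts.head? = some d ∧ p.darts.getLast? = some e ∧
      List.Chain' (fun a b : G.Dart => b ≠ a.symm) p.darts :=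
  fun d e => G.exists_walk_of_reflTransGen_nonBacktrackingDigraph
    (G.reflTransGen_nonBacktrackingDigraph hconn hdeg hbig d e)

/-- Appendix B, graph form. Let `G` be a finite connected simple graph in
which every vertex has degree at least `2` and some vertex has degree at least `3`.  Then for
every ordered pair of darts `(d, e)` there is a walk whose dart sequence begins with `d`,
ends with `e`, and never follows a dart immediately by its reverse (a non-backtracking
walk); i.e. the non-backtracking line digraph of `G` is strongly connected. -/
theorem nonbacktracking_line_digraph_strongly_connected {V : Type*} [Fintype V]
    [DecidableEq V] (G : SimpleGraph V) [DecidableRel G.Adj]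
    (hconn : G.Connected) (hdeg : ∀ v, 2 ≤ G.degree v) (hbig : ∃ v, 3 ≤ G.degree v) :
    ∀ d e : G.Dart, ∃ p : G.Walk d.fst e.snd,
      p.darts.head? = some d ∧ p.darts.getLast? = some e ∧
      List.Chain' (fun a b : G.Dart => b ≠ a.symm) p.darts :=
  nonbacktracking_line_digraph_strongly_connected_general G hconn hdeg hbig
end

section
/- Let F be a field, let A be an m×m matrix over F, and let S₁ and S₂ be disjoint subsets of the index set, each of cardinality n, such that every column of A indexed by S₁ is zero and every row of A indexed by S₂ is zero. Then the characteristic polynomial of A equals X^{2n} times the characteristic polynomial of the principal submatrix of A obtained by deleting the rows and columns indexed by S₁ ∪ S₂. -/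
/-!
Order the indices as `S₁ < (S₁ ∪ S₂)ᶜ < S₂`. An entry `A i j` whose column lies in a strictly
earlier class than its row sits in a zero column of `S₁` or in a zero row of `S₂`, so `A` is
block triangular for this grading and its characteristic polynomial is the product of those of
the three diagonal blocks. The blocks on `S₁` and `S₂` vanish and contribute `X ^ k` each.
-/

open Polynomial Finset

namespace Matrix

variable {R : Type*} [CommRing R] {n : Type*} [DecidableEq n]

theorem charpoly_submatrix_eq_X_pow_of_forall_eq_zero (M : Matrix n n R) {S : Finset n}
    (h : ∀ i ∈ S, ∀ j ∈ S, M i j = 0) :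
    (M.submatrix ((↑) : S → n) (↑)).charpoly = X ^ #S := by
  have hzero : M.submatrix (fun i : S => (i : n)) (fun j : S => (j : n)) = 0 := by
    ext i j
    exact h i i.2 j j.2
  rw [hzero, charpoly_zero, Fintype.card_coe]

variable [Fintype n]

theorem BlockTriangular.charpoly_eq_prod_univ {α : Type*} [LinearOrder α] [Fintype α]
    {M : Matrix n n R} {b : n → α} (h : M.BlockTriangular b) :
    M.charpoly = ∏ a, (M.toSquareBlock b a).charpoly := by
  rw [h.charpoly]
  refine prod_subset (subset_univ _) fun a _ ha => ?_
  have : IsEmpty {i // b i = a} := ⟨fun i => ha (mem_image.2 ⟨i, mem_univ _, i.2⟩)⟩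
  exact charpoly_isEmpty

theorem charpoly_toSquareBlock_eq_of_forall_iff {α : Type*} [DecidableEq α] (M : Matrix n n R)
    {b : n → α} {a : α} {S : Finset n} (h : ∀ i, b i = a ↔ i ∈ S) :
    (M.toSquareBlock b a).charpoly = (M.submatrix ((↑) : S → n) (↑)).charpoly := by
  rw [← charpoly_reindex (Equiv.subtypeEquivRight h)]
  rfl

end Matrix

def zeroColsRowsGrading {n : Type*} [DecidableEq n] (S₁ S₂ : Finset n) (i : n) : Fin 3 :=
  if i ∈ S₁ then 0 else if i ∈ S₂ then 2 else 1

section zeroColsRowsGrading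

variable {n : Type*} [DecidableEq n] {S₁ S₂ : Finset n}

theorem zeroColsRowsGrading_eq_zero_iff (i : n) : zeroColsRowsGrading S₁ S₂ i = 0 ↔ i ∈ S₁ := by
  unfold zeroColsRowsGrading
  split_ifs <;> simp_all

theorem zeroColsRowsGrading_eq_one_iff [Fintype n] (i : n) :
    zeroColsRowsGrading S₁ S₂ i = 1 ↔ i ∈ (S₁ ∪ S₂)ᶜ := by
  unfold zeroColsRowsGrading
  split_ifs <;> simp_all

theorem zeroColsRowsGrading_eq_two_iff (hdis : Disjoint S₁ S₂) (i : n) :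
    zeroColsRowsGrading S₁ S₂ i = 2 ↔ i ∈ S₂ := by
  by_cases h₁ : i ∈ S₁
  · simp [zeroColsRowsGrading, h₁, disjoint_left.1 hdis h₁]
  · by_cases h₂ : i ∈ S₂ <;> simp [zeroColsRowsGrading, h₁, h₂]

theorem Matrix.blockTriangular_zeroColsRowsGrading {R : Type*} [Zero R] {A : Matrix n n R}
    (hcol : ∀ i, ∀ j ∈ S₁, A i j = 0) (hrow : ∀ i ∈ S₂, ∀ j, A i j = 0) :
    A.BlockTriangular (zeroColsRowsGrading S₁ S₂) := by
  intro i j hlt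
  unfold zeroColsRowsGrading at hlt
  split_ifs at hlt <;>
    first | exact hcol i j ‹_› | exact hrow i ‹_› j | exact absurd hlt (by decide)

end zeroColsRowsGrading

/-- matrix core of Theorem 5. If `S₁` and `S₂` are disjoint index sets of
equal cardinality `k` such that the columns of `A` indexed by `S₁` and the rows of `A`
indexed by `S₂` are zero, then the characteristic polynomial of `A` is `X^(2k)` times the
characteristic polynomial of the principal submatrix obtained by deleting the rows and
columns indexed by `S₁ ∪ S₂`. -/
theorem charpoly_eq_X_pow_mul_of_zero_rows_cols {F : Type*} [Field F]
    {n : Type*} [Fintype n] [DecidableEq n]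
    (A : Matrix n n F) (S₁ S₂ : Finset n) (hdis : Disjoint S₁ S₂)
    (k : ℕ) (h1 : S₁.card = k) (h2 : S₂.card = k)
    (hcol : ∀ i, ∀ j ∈ S₁, A i j = 0)
    (hrow : ∀ i ∈ S₂, ∀ j, A i j = 0) :
    A.charpoly = Polynomial.X ^ (2 * k) *
      (A.submatrix (fun i : ((S₁ ∪ S₂)ᶜ : Finset n) => (i : n))
        (fun j : ((S₁ ∪ S₂)ᶜ : Finset n) => (j : n))).charpoly := by
  rw [(Matrix.blockTriangular_zeroColsRowsGrading hcol hrow).charpoly_eq_prod_univ, Fin.prod_univ_three,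
    A.charpoly_toSquareBlock_eq_of_forall_iff zeroColsRowsGrading_eq_zero_iff,
    A.charpoly_toSquareBlock_eq_of_forall_iff zeroColsRowsGrading_eq_one_iff,
    A.charpoly_toSquareBlock_eq_of_forall_iff (zeroColsRowsGrading_eq_two_iff hdis),
    A.charpoly_submatrix_eq_X_pow_of_forall_eq_zero fun i _ j hj => hcol i j hj,
    A.charpoly_submatrix_eq_X_pow_of_forall_eq_zero fun i hi j _ => hrow i hi j, h1, h2]
  ring
end
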